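/- arXiv:2506.23238 — 4 statements merged into one kernel-verified Lean document; each statement's English description precedes it below -/
import Mathlib

section
/- Let 1 ≤ k ≤ r and r+1 ≤ j_{k+1} < … < j_r ≤ rd. Then the r-uniform hypergraph Γ_{k,r}(j_{k+1},…,j_r) is leaf-equivalent to the empty r-uniform hypergraph, and this leaf-equivalence can be achieved using only (r−1)-faces that contain all of j_{k+1},…,j_r: there is an enumeration σ_1,…,σ_n of the hyperedges of Γ_{k,r}(j_{k+1},…,j_r) such that for every 1 ≤ i ≤ n there exists s ∈ σ_i ∩ {1,…,r} with σ_i ∖ {s} not a subset of σ_j for all j < i. -/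
open Finset
open scoped Classical

/-- `Sset r a` is the set `S_a = {r(a-1)+1, ..., ra}`. -/
def Sset (r a : ℕ) : Finset ℕ := Finset.Icc (r * (a - 1) + 1) (r * a)

/-- The hyperedge set of the `r`-uniform hypergraph `Ω_a^{(r,d)}`: all `r`-element
subsets `{i_1 < ... < i_r}` of `{1,...,rd}` such that there is `t ∈ {1,...,r}` with
`i_1 + ... + i_r ≡ t-1 (mod r)` and `i_t ∈ S_a` (the `t`-th smallest element `i_t`
is characterized as the `x ∈ σ` with exactly `t-1` smaller elements of `σ`). -/
noncomputable def OmegaEdges (r d a : ℕ) : Finset (Finset ℕ) :=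
  ((Finset.Icc 1 (r * d)).powersetCard r).filter (fun σ =>
    ∃ t ∈ Finset.Icc 1 r, ∃ x ∈ σ,
      (σ.filter (· < x)).card = t - 1 ∧
      (∑ i ∈ σ, i) % r = t - 1 ∧
      x ∈ Sset r a)

/-- The hyperedge set of `Γ_{k,r}(j_{k+1},...,j_r)` (where `J = {j_{k+1},...,j_r}`):
the hyperedges of `Ω_1^{(r,d)}` having exactly `k` elements in `{1,...,r}` and whose
part outside `{1,...,r}` equals `J`. -/
noncomputable def GammaEdges (r d k : ℕ) (J : Finset ℕ) : Finset (Finset ℕ) :=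
  (OmegaEdges r d 1).filter (fun σ =>
    (σ ∩ Finset.Icc 1 r).card = k ∧ σ \ Finset.Icc 1 r = J)

/-- The hyperedge set of the `k`-uniform hypergraph `Γ_{k,r}^a`: all `k`-element
subsets `{i_1 < ... < i_k}` of `{1,...,r}` with `i_1 + ... + i_k ≡ a + t (mod r)`
for some `0 ≤ t ≤ k-1`. -/
noncomputable def GammaA (r k : ℕ) (a : ℤ) : Finset (Finset ℕ) :=
  ((Finset.Icc 1 r).powersetCard k).filter (fun σ =>
    ∃ t ∈ Finset.range k, (∑ i ∈ σ, (i : ℤ)) % (r : ℤ) = (a + (t : ℤ)) % (r : ℤ))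

/-- A family `E` of hyperedges is leaf-equivalent to the empty hypergraph if its
hyperedges can be enumerated `σ_1, ..., σ_n` so that each `σ_i` has a face
`σ_i \ {s}` (`s ∈ σ_i`) not contained in any earlier `σ_j`. -/
def LeafEquivToEmpty (E : Finset (Finset ℕ)) : Prop :=
  ∃ l : List (Finset ℕ), l.Nodup ∧ l.toFinset = E ∧
    ∀ i : Fin l.length, ∃ s ∈ l.get i,
      ∀ j : Fin l.length, (j : ℕ) < (i : ℕ) → ¬ (l.get i \ {s} ⊆ l.get j)

/-- The boundary of a single simplex `{a_1 < a_2 < ... < a_k}`: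
`∑_{s=1}^{k} (-1)^{s+1} {a_1,...,a_{s-1},a_{s+1},...,a_k}`. -/
noncomputable def boundaryOf (σ : Finset ℕ) : Finset ℕ →₀ ℚ :=
  ∑ s ∈ σ, ((-1 : ℚ) ^ ((σ.filter (· < s)).card)) • Finsupp.single (σ.erase s) (1 : ℚ)

/-- The simplicial boundary map `∂` on the free `ℚ`-vector space with basis the
finite subsets of `ℕ`. -/
noncomputable def boundaryMap : (Finset ℕ →₀ ℚ) →ₗ[ℚ] (Finset ℕ →₀ ℚ) :=
  Finsupp.lsum ℚ (fun σ => LinearMap.toSpanSingleton ℚ (Finset ℕ →₀ ℚ) (boundaryOf σ))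

/-- The space of top-dimensional cycles of the hypergraph with hyperedge set `E`:
elements of the span of `E` killed by the boundary map.  Its dimension is the top
Betti number. -/
noncomputable def cycleSpace (E : Finset (Finset ℕ)) : Submodule ℚ (Finset ℕ →₀ ℚ) :=
  Finsupp.supported ℚ ℚ (↑E : Set (Finset ℕ)) ⊓ LinearMap.ker boundaryMap


/- ======================  auxiliary development  ====================== -/

section Stmt12Aux

/-- `nth I j` is the `(j+1)`-th smallest element of `I` (0-indexed). -/
noncomputable def nth (I : Finset ℕ) (j : ℕ) : ℕ := (I.sort (· ≤ ·)).getD j 0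

/-- number of elements of `I` that are `≤ x`. -/
noncomputable def cnt (I : Finset ℕ) (x : ℕ) : ℕ := (I.filter (fun y => y ≤ x)).card

lemma sorted_getD_le_iff : ∀ (l : List ℕ), l.Pairwise (· ≤ ·) → ∀ (j : ℕ), j < l.length → ∀ x : ℕ,
    (l.getD j 0 ≤ x ↔ j < (l.filter (fun y => y ≤ x)).length) := by
  intro l
  induction l with
  | nil => intro _ j hj; simp at hj
  | cons a t ih =>
    intro hs j hj x
    have hst : t.Pairwise (· ≤ ·) := hs.of_cons
    have hall : ∀ b ∈ t, a ≤ b := fun b hb => List.rel_of_pairwise_cons hs hb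
    by_cases hax : a ≤ x
    · cases j with
      | zero => simp [hax, List.filter_cons, nth]
      | succ j =>
        have hj' : j < t.length := by simpa using hj
        have := ih hst j hj' x
        simpa [List.filter_cons, hax, List.getD_cons_succ, Nat.succ_lt_succ_iff] using this
    · have hnil : t.filter (fun y => decide (y ≤ x)) = [] := by
        rw [List.filter_eq_nil_iff]
        intro b hb hbx
        exact hax (le_trans (hall b hb) (by simpa using hbx))
      cases j with
      | zero => simp [List.filter_cons, hax, hnil]
      | succ j =>
        have hj' : j < t.length := by simpa using hj
        have hm : t.getD j 0 ∈ t := by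
          rw [List.getD_eq_getElem _ _ hj']; exact List.getElem_mem hj'
        simp only [List.getD_cons_succ, List.filter_cons, hax]
        constructor
        · intro h; exact absurd (le_trans (hall _ hm) h) hax
        · intro h; rw [hnil] at h; simp at h

lemma cnt_eq_length (I : Finset ℕ) (x : ℕ) :
    cnt I x = ((I.sort (· ≤ ·)).filter (fun y => y ≤ x)).length := by
  rw [cnt, Finset.card, Finset.filter_val, ← Finset.sort_eq I (· ≤ ·),
    Multiset.filter_coe, Multiset.coe_card]

lemma nth_le_iff (I : Finset ℕ) {j : ℕ} (hj : j < I.card) (x : ℕ) :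
    nth I j ≤ x ↔ j < cnt I x := by
  rw [cnt_eq_length]
  exact sorted_getD_le_iff _ (Finset.pairwise_sort I (· ≤ ·)) j
    (by rw [Finset.length_sort]; exact hj) x

lemma nth_mem (I : Finset ℕ) {j : ℕ} (hj : j < I.card) : nth I j ∈ I := by
  have hj' : j < (I.sort (· ≤ ·)).length := by rw [Finset.length_sort]; exact hj
  have : nth I j ∈ I.sort (· ≤ ·) := by
    rw [nth, List.getD_eq_getElem _ _ hj']; exact List.getElem_mem hj'
  simpa [Finset.mem_sort] using this

lemma nth_lt_nth (I : Finset ℕ) {i j : ℕ} (hij : i < j) (hj : j < I.card) :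
    nth I i < nth I j := by
  have hs := (Finset.sortedLT_sort I).pairwise
  have hj' : j < (I.sort (· ≤ ·)).length := by rw [Finset.length_sort]; exact hj
  have hi' : i < (I.sort (· ≤ ·)).length := lt_trans hij hj'
  have := List.pairwise_iff_get.mp hs ⟨i, hi'⟩ ⟨j, hj'⟩ hij
  rw [nth, nth, List.getD_eq_getElem _ _ hi', List.getD_eq_getElem _ _ hj']
  simpa [List.get_eq_getElem] using this

lemma cnt_nth (I : Finset ℕ) {j : ℕ} (hj : j < I.card) : cnt I (nth I j) = j + 1 := by
  have h1 : j < cnt I (nth I j) := (nth_le_iff I hj _).mp le_rfl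
  have h2 : cnt I (nth I j) ≤ j + 1 := by
    by_cases hk : j + 1 < I.card
    · by_contra h
      push_neg at h
      have : nth I (j+1) ≤ nth I j := (nth_le_iff I hk _).mpr h
      exact absurd (nth_lt_nth I (Nat.lt_succ_self j) hk) (not_lt.mpr this)
    · have : cnt I (nth I j) ≤ I.card := Finset.card_filter_le _ _
      omega
  omega

lemma cnt_le_of_subset_Icc {r : ℕ} (I : Finset ℕ) (hI : I ⊆ Finset.Icc 1 r) (x : ℕ) :
    cnt I x ≤ x := by
  have : I.filter (fun y => y ≤ x) ⊆ Finset.Icc 1 x := by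
    intro y hy
    rw [Finset.mem_filter] at hy
    have := hI hy.1
    rw [Finset.mem_Icc] at this ⊢
    exact ⟨this.1, hy.2⟩
  calc cnt I x ≤ (Finset.Icc 1 x).card := Finset.card_le_card this
    _ = x := by rw [Nat.card_Icc]; omega

lemma nth_ge {r : ℕ} (I : Finset ℕ) (hI : I ⊆ Finset.Icc 1 r) {j : ℕ} (hj : j < I.card) :
    j + 1 ≤ nth I j := by
  have := cnt_nth I hj
  have := cnt_le_of_subset_Icc I hI (nth I j)
  omega

lemma nth_le_r {r : ℕ} (I : Finset ℕ) (hI : I ⊆ Finset.Icc 1 r) {j : ℕ} (hj : j < I.card) :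
    nth I j ≤ r := by
  have := hI (nth_mem I hj)
  rw [Finset.mem_Icc] at this
  exact this.2

lemma nth_ub {r : ℕ} (I : Finset ℕ) (hI : I ⊆ Finset.Icc 1 r) {j : ℕ} (hj : j < I.card) :
    nth I j + (I.card - 1 - j) ≤ r := by
  have hcnt := cnt_nth I hj
  have hsplit := Finset.card_filter_add_card_filter_not (s := I)
    (p := fun y => y ≤ nth I j)
  have habove : (I.filter (fun y => ¬ y ≤ nth I j)).card ≤ r - nth I j := by
    have hsub : I.filter (fun y => ¬ y ≤ nth I j) ⊆ Finset.Icc (nth I j + 1) r := by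
      intro y hy
      rw [Finset.mem_filter] at hy
      have := hI hy.1
      rw [Finset.mem_Icc] at this ⊢
      omega
    calc _ ≤ (Finset.Icc (nth I j + 1) r).card := Finset.card_le_card hsub
      _ = r - nth I j := by rw [Nat.card_Icc]; omega
  have hler : nth I j ≤ r := nth_le_r I hI hj
  have : cnt I (nth I j) + (I.filter (fun y => ¬ y ≤ nth I j)).card = I.card := hsplit
  omega

lemma cnt_split (K : Finset ℕ) {y z : ℕ} (hyz : y ≤ z) :
    cnt K z = cnt K y + (K.filter (fun v => y < v ∧ v ≤ z)).card := by
  rw [cnt, cnt]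
  rw [← Finset.card_union_of_disjoint]
  · congr 1
    ext v
    simp only [Finset.mem_union, Finset.mem_filter]
    constructor
    · rintro ⟨hv, hvz⟩
      by_cases h : v ≤ y
      · exact Or.inl ⟨hv, h⟩
      · exact Or.inr ⟨hv, by omega, hvz⟩
    · rintro (⟨hv, h⟩ | ⟨hv, h1, h2⟩)
      · exact ⟨hv, le_trans h hyz⟩
      · exact ⟨hv, h2⟩
  · rw [Finset.disjoint_filter]
    intro v _ hv
    omega

lemma nth_congr_above (I I' : Finset ℕ) (y : ℕ)
    (hcard : I.card = I'.card)
    (hcnt : cnt I y = cnt I' y)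
    (hiff : ∀ x, y < x → (x ∈ I ↔ x ∈ I'))
    {j : ℕ} (hj : j < I.card) (hcj : cnt I y ≤ j) :
    nth I j = nth I' j := by
  have hj' : j < I'.card := hcard ▸ hj
  have hcnt_all : ∀ z, y ≤ z → cnt I z = cnt I' z := by
    intro z hz
    have hfeq : I.filter (fun v => y < v ∧ v ≤ z) = I'.filter (fun v => y < v ∧ v ≤ z) := by
      ext x
      simp only [Finset.mem_filter]
      constructor
      · rintro ⟨hx, h1, h2⟩; exact ⟨(hiff x h1).mp hx, h1, h2⟩
      · rintro ⟨hx, h1, h2⟩; exact ⟨(hiff x h1).mpr hx, h1, h2⟩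
    rw [cnt_split I hz, cnt_split I' hz, hcnt, hfeq]
  have hyI : y < nth I j := by
    by_contra h
    push_neg at h
    have := (nth_le_iff I hj y).mp h
    omega
  have hyI' : y < nth I' j := by
    by_contra h
    push_neg at h
    have := (nth_le_iff I' hj' y).mp h
    rw [← hcnt] at this
    omega
  apply le_antisymm
  · rw [nth_le_iff I hj, hcnt_all _ (le_of_lt hyI'), cnt_nth I' hj']
    omega
  · rw [nth_le_iff I' hj', ← hcnt_all _ (le_of_lt hyI), cnt_nth I hj]
    omega

lemma geom_aux (R : ℕ) : ∀ T : ℕ, (∑ j ∈ Finset.range T, R * (R+1)^j) + 1 = (R+1)^T := by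
  intro T
  induction T with
  | zero => simp
  | succ T ih =>
    rw [Finset.sum_range_succ, pow_succ]
    nlinarith [ih]

lemma digit_lex (R k T : ℕ) (f g : ℕ → ℕ) (hT : T < k)
    (hfb : ∀ j, j < k → f j ≤ R)
    (heq : ∀ j, T < j → j < k → f j = g j) (hlt : f T < g T) :
    ∑ j ∈ Finset.range k, f j * (R+1)^j < ∑ j ∈ Finset.range k, g j * (R+1)^j := by
  have hsplit : ∀ h : ℕ → ℕ, ∑ j ∈ Finset.range k, h j * (R+1)^j
      = (∑ j ∈ Finset.range T, h j * (R+1)^j) + h T * (R+1)^T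
        + ∑ j ∈ Finset.Ico (T+1) k, h j * (R+1)^j := by
    intro h
    rw [Finset.range_eq_Ico, ← Finset.sum_Ico_consecutive _ (Nat.zero_le (T+1)) hT,
      ← Finset.range_eq_Ico, Finset.sum_range_succ]
  rw [hsplit f, hsplit g]
  have htail : ∑ j ∈ Finset.Ico (T+1) k, f j * (R+1)^j
      = ∑ j ∈ Finset.Ico (T+1) k, g j * (R+1)^j := by
    apply Finset.sum_congr rfl
    intro j hj
    rw [Finset.mem_Ico] at hj
    rw [heq j (by omega) hj.2]
  have hhead : ∑ j ∈ Finset.range T, f j * (R+1)^j < (R+1)^T := by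
    have hb : ∑ j ∈ Finset.range T, f j * (R+1)^j ≤ ∑ j ∈ Finset.range T, R * (R+1)^j := by
      apply Finset.sum_le_sum
      intro j hj
      rw [Finset.mem_range] at hj
      exact Nat.mul_le_mul_right _ (hfb j (by omega))
    have := geom_aux R T
    omega
  have hmid : f T * (R+1)^T + (R+1)^T ≤ g T * (R+1)^T := by
    have : (f T + 1) * (R+1)^T ≤ g T * (R+1)^T :=
      Nat.mul_le_mul_right _ (by omega)
    rw [add_mul, one_mul] at this
    exact this
  omega

/-- the digit vector of `I` : `a_j - j` above the index `u`, `0` below it. -/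
noncomputable def dig (r e : ℕ) (I : Finset ℕ) (j : ℕ) : ℕ :=
  if (∑ i ∈ I, i + e) % r ≤ j then nth I j - j else 0

/-- the potential certifying the enumeration order. -/
noncomputable def Phi (r k e : ℕ) (I : Finset ℕ) : ℕ :=
  ∑ j ∈ Finset.range k, dig r e I j * (r+1)^j

lemma cnt_insert_of_le (F : Finset ℕ) {a z : ℕ} (ha : a ∉ F) (haz : a ≤ z) :
    cnt (insert a F) z = cnt F z + 1 := by
  rw [cnt, cnt, Finset.filter_insert, if_pos haz,
    Finset.card_insert_of_notMem (fun h => ha (Finset.mem_filter.mp h).1)]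

lemma core (r k e : ℕ) (hk : 1 ≤ k) (hkr : k ≤ r)
    (I I' : Finset ℕ) (hI : I ⊆ Finset.Icc 1 r) (hI' : I' ⊆ Finset.Icc 1 r)
    (hc : I.card = k) (hc' : I'.card = k)
    (hu : (∑ i ∈ I, i + e) % r < k) (hu' : (∑ i ∈ I', i + e) % r < k)
    (hne : I' ≠ I) (hsub : I \ {nth I ((∑ i ∈ I, i + e) % r)} ⊆ I') :
    Phi r k e I' < Phi r k e I := by
  set u := (∑ i ∈ I, i + e) % r with hudef
  set u' := (∑ i ∈ I', i + e) % r with hu'def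
  set s := nth I u with hsdef
  have huk : u < I.card := by rw [hc]; exact hu
  have hs_mem : s ∈ I := nth_mem I huk
  set F := I.erase s with hFdef
  have hsub' : F ⊆ I' := by rw [hFdef, Finset.erase_eq]; exact hsub
  have hFcard : F.card = k - 1 := by rw [hFdef, Finset.card_erase_of_mem hs_mem, hc]
  have hsdcard : (I' \ F).card = 1 := by
    rw [Finset.card_sdiff_of_subset hsub', hc', hFcard]; omega
  obtain ⟨s', hs'⟩ := Finset.card_eq_one.mp hsdcard
  have hs'memsd : s' ∈ I' \ F := by rw [hs']; exact Finset.mem_singleton_self s'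
  have hs'I' : s' ∈ I' := (Finset.mem_sdiff.mp hs'memsd).1
  have hs'F : s' ∉ F := (Finset.mem_sdiff.mp hs'memsd).2
  have hI'eq : I' = insert s' F := by
    have h1 : I' \ F ∪ F = I' := Finset.sdiff_union_of_subset hsub'
    rw [← h1, hs']
    ext x
    simp [Finset.mem_insert, Finset.mem_union]
  have hIeq : I = insert s F := (Finset.insert_erase hs_mem).symm
  have hsF : s ∉ F := Finset.notMem_erase s I
  have hs's : s' ≠ s := by
    intro h
    apply hne
    rw [hI'eq, h, ← hIeq]
  have hs'I : s' ∉ I := by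
    rw [hIeq, Finset.mem_insert]
    push_neg
    exact ⟨hs's, hs'F⟩
  have hsI' : s ∉ I' := by
    rw [hI'eq, Finset.mem_insert]
    push_neg
    exact ⟨fun h => hs's h.symm, hsF⟩
  -- sums
  have hsumI : ∑ i ∈ I, i = (∑ i ∈ F, i) + s := by
    rw [hIeq, Finset.sum_insert hsF]; ring
  have hsumI' : ∑ i ∈ I', i = (∑ i ∈ F, i) + s' := by
    rw [hI'eq, Finset.sum_insert hs'F]; ring
  -- bounds
  have hs1 : 1 ≤ s ∧ s ≤ r := by
    have := hI hs_mem; rw [Finset.mem_Icc] at this; exact this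
  have hs'1 : 1 ≤ s' ∧ s' ≤ r := by
    have := hI' hs'I'; rw [Finset.mem_Icc] at this; exact this
  have hsu : u + 1 ≤ s := nth_ge I hI huk
  have hsub_r : s + (k - 1 - u) ≤ r := by
    have := nth_ub I hI huk; rw [hc] at this; exact this
  -- mod equation : u' + s = u + s'
  have hmodeq : (u' + s) % r = (u + s') % r := by
    rw [hudef, hu'def, Nat.mod_add_mod, Nat.mod_add_mod, hsumI, hsumI']
    congr 1
    ring
  have hkey : u' + s = u + s' := by
    have hd : ((r:ℤ)) ∣ ((u + s' : ℕ) : ℤ) - ((u' + s : ℕ) : ℤ) := by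
      rw [← Nat.modEq_iff_dvd]
      exact hmodeq
    obtain ⟨c, hcc⟩ := hd
    have hb1 : u' + s ≤ r + u := by omega
    have hb2 : u + s' ≤ u + r := by omega
    have hr1 : (1:ℤ) ≤ (r:ℤ) := by exact_mod_cast Nat.one_le_iff_ne_zero.mpr (by omega)
    have hc0 : c = 0 := by
      by_contra hc0
      rcases lt_or_gt_of_ne hc0 with h|h
      · have h1 : (r:ℤ) * c ≤ (r:ℤ) * (-1) :=
          mul_le_mul_of_nonneg_left (by omega) (by omega)
        have h2 : (1:ℤ) ≤ ((u' + s : ℕ) : ℤ) := by exact_mod_cast (by omega : 1 ≤ u' + s)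
        have h3 : ((u' + s : ℕ) : ℤ) ≤ (r:ℤ) + (u:ℤ) := by
          push_cast; exact_mod_cast (by exact_mod_cast hb1 : ((u' + s:ℕ):ℤ) ≤ ((r + u:ℕ):ℤ))
        have h5 : (u:ℤ) + 1 ≤ ((u + s' : ℕ) : ℤ) := by
          push_cast; omega
        omega
      · have h1 : (r:ℤ) * 1 ≤ (r:ℤ) * c :=
          mul_le_mul_of_nonneg_left (by omega) (by omega)
        have h2 : ((u + s' : ℕ) : ℤ) ≤ (u:ℤ) + (r:ℤ) := by push_cast; omega
        have h3 : (u:ℤ) + 1 ≤ ((u' + s : ℕ) : ℤ) := by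
          push_cast
          have : u + 1 ≤ s := hsu
          omega
        omega
    rw [hc0, mul_zero] at hcc
    omega
  have hcard : I.card = I'.card := by rw [hc, hc']
  have hcntIs : cnt I s = u + 1 := by rw [hsdef]; exact cnt_nth I huk
  rcases lt_or_gt_of_ne hs's with hlt | hgt
  · -- LEFT case : s' < s, u' < u
    have huu' : u' < u := by omega
    -- cnt I' s = u + 1
    have hcntFs : cnt I s = cnt F s + 1 := by
      rw [hIeq]; exact cnt_insert_of_le F hsF le_rfl
    have hcntI's : cnt I' s = u + 1 := by
      rw [hI'eq, cnt_insert_of_le F hs'F (le_of_lt hlt)]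
      omega
    have hiff : ∀ x, s < x → (x ∈ I ↔ x ∈ I') := by
      intro x hx
      rw [hIeq, hI'eq, Finset.mem_insert, Finset.mem_insert]
      constructor
      · rintro (h|h); · omega
        · exact Or.inr h
      · rintro (h|h); · omega
        · exact Or.inr h
    have hdig_eq : ∀ j, u < j → j < k → dig r e I' j = dig r e I j := by
      intro j hj1 hj2
      rw [dig, dig, ← hudef, ← hu'def, if_pos (by omega), if_pos (by omega)]
      rw [nth_congr_above I I' s hcard (by omega) hiff (by omega) (by omega)]
    have hdigI : 1 ≤ dig r e I u := by
      rw [dig, ← hudef, if_pos le_rfl, ← hsdef]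
      omega
    have hdigI' : dig r e I' u < dig r e I u := by
      rw [dig, dig, ← hudef, ← hu'def, if_pos le_rfl, if_pos (by omega), ← hsdef]
      have hnthI'u : nth I' u < s := by
        have h1 : nth I' u ≤ s := by
          rw [nth_le_iff I' (by omega) s, hcntI's]; omega
        have h2 : nth I' u ∈ I' := nth_mem I' (by rw [hc']; omega)
        rcases lt_or_eq_of_le h1 with h|h
        · exact h
        · exact absurd (h ▸ h2) hsI'
      omega
    exact digit_lex r k u (dig r e I') (dig r e I) hu
      (fun j hj => by
        rw [dig]
        split
        · have h1 : nth I' j ≤ r := nth_le_r I' hI' (by omega)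
          omega
        · omega)
      hdig_eq hdigI'
  · -- RIGHT case : s < s', u < u'
    have huu' : u < u' := by omega
    set T := u' - 1 with hTdef
    have hTu : u ≤ T := by omega
    have hcntIs' : cnt I s' ≤ u' := by
      have hsplit := cnt_split I (le_of_lt hgt)
      have hbound : (I.filter (fun v => s < v ∧ v ≤ s')).card ≤ s' - s - 1 := by
        have hss : I.filter (fun v => s < v ∧ v ≤ s') ⊆ Finset.Ioo s s' := by
          intro x hx
          rw [Finset.mem_filter] at hx
          rw [Finset.mem_Ioo]
          have hxs' : x ≠ s' := fun h => hs'I (h ▸ hx.1)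
          omega
        calc _ ≤ (Finset.Ioo s s').card := Finset.card_le_card hss
          _ = s' - s - 1 := by rw [Nat.card_Ioo]
      omega
    have hcntFs' : cnt I s' = cnt F s' + 1 := by
      rw [hIeq]; exact cnt_insert_of_le F hsF (le_of_lt hgt)
    have hcntI's' : cnt I' s' = cnt I s' := by
      rw [hI'eq, cnt_insert_of_le F hs'F le_rfl]
      omega
    have hiff : ∀ x, s' < x → (x ∈ I ↔ x ∈ I') := by
      intro x hx
      rw [hIeq, hI'eq, Finset.mem_insert, Finset.mem_insert]
      constructor
      · rintro (h|h); · omega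
        · exact Or.inr h
      · rintro (h|h); · omega
        · exact Or.inr h
    have hdig_eq : ∀ j, T < j → j < k → dig r e I' j = dig r e I j := by
      intro j hj1 hj2
      rw [dig, dig, ← hudef, ← hu'def, if_pos (by omega), if_pos (by omega)]
      rw [nth_congr_above I I' s' hcard hcntI's'.symm hiff (by omega) (by omega)]
    have hTk : T < k := by omega
    have hdigI : 1 ≤ dig r e I T := by
      rw [dig, ← hudef, if_pos (by omega)]
      have := nth_ge I hI (j := T) (by omega)
      omega
    have hdigI' : dig r e I' T = 0 := by
      rw [dig, ← hu'def, if_neg (by omega)]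
    exact digit_lex r k T (dig r e I') (dig r e I) hTk
      (fun j hj => by
        rw [dig]
        split
        · have h1 : nth I' j ≤ r := nth_le_r I' hI' (by omega)
          omega
        · omega)
      hdig_eq (by omega)


lemma recover (r : ℕ) (J : Finset ℕ) (hJ : ∀ y ∈ J, r + 1 ≤ y)
    (I : Finset ℕ) (hI : I ⊆ Finset.Icc 1 r) : (I ∪ J) ∩ Finset.Icc 1 r = I := by
  ext x
  simp only [Finset.mem_inter, Finset.mem_union, Finset.mem_Icc]
  constructor
  · rintro ⟨h1 | h1, h2⟩
    · exact h1
    · have := hJ x h1; omega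
  · intro hx
    have := hI hx
    rw [Finset.mem_Icc] at this
    exact ⟨Or.inl hx, this⟩

lemma buildList (r k : ℕ) (J : Finset ℕ) (hk : 1 ≤ k) (hkr : k ≤ r)
    (hJ : ∀ y ∈ J, r + 1 ≤ y) :
    ∀ (n : ℕ) (S : Finset (Finset ℕ)),
      S.card = n →
      (∀ I ∈ S, I ⊆ Finset.Icc 1 r ∧ I.card = k ∧ (∑ i ∈ I, i + ∑ i ∈ J, i) % r < k) →
      ∃ l : List (Finset ℕ), l.Nodup ∧ l.toFinset = S.image (fun I => I ∪ J) ∧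
        ∀ i : Fin l.length, ∃ s ∈ l.get i ∩ Finset.Icc 1 r,
          ∀ j : Fin l.length, (j : ℕ) < (i : ℕ) → ¬ (l.get i \ {s} ⊆ l.get j) := by
  intro n
  induction n with
  | zero =>
    intro S hS0 _
    refine ⟨[], List.nodup_nil, ?_, fun i => (Nat.not_lt_zero _ i.isLt).elim⟩
    rw [Finset.card_eq_zero.mp hS0]
    simp
  | succ n ih =>
    intro S hScard hSP
    have hSne : S.Nonempty := by rw [← Finset.card_pos, hScard]; omega
    obtain ⟨I₀, hI₀S, hI₀min⟩ := Finset.exists_min_image S (Phi r k (∑ i ∈ J, i)) hSne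
    obtain ⟨hI₀sub, hI₀card, hI₀u⟩ := hSP I₀ hI₀S
    obtain ⟨l', hnd', htf', hprop'⟩ := ih (S.erase I₀)
      (by rw [Finset.card_erase_of_mem hI₀S, hScard]; omega)
      (fun I hI => hSP I (Finset.mem_of_mem_erase hI))
    set σ₀ : Finset ℕ := I₀ ∪ J with hσ₀def
    set l : List (Finset ℕ) := l' ++ [σ₀] with hldef
    have hlen : l.length = l'.length + 1 := by simp [hldef]
    have hget_left : ∀ (m : ℕ) (hm : m < l'.length), l.get ⟨m, by omega⟩ = l'.get ⟨m, hm⟩ := by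
      intro m hm
      simp only [hldef, List.get_eq_getElem]
      exact List.getElem_append_left hm
    have hget_last : l.get ⟨l'.length, by omega⟩ = σ₀ := by
      simp [hldef, List.get_eq_getElem]
    have hnotmem : σ₀ ∉ l' := by
      intro hmem
      have : σ₀ ∈ l'.toFinset := List.mem_toFinset.mpr hmem
      rw [htf'] at this
      obtain ⟨I', hI'mem, hI'eq⟩ := Finset.mem_image.mp this
      obtain ⟨hI'sub, _, _⟩ := hSP I' (Finset.mem_of_mem_erase hI'mem)
      have : I' = I₀ := by
        have h1 := recover r J hJ I' hI'sub
        have h2 := recover r J hJ I₀ hI₀sub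
        rw [← h1, ← h2, hI'eq]
      exact (Finset.ne_of_mem_erase hI'mem) this
    refine ⟨l, ?_, ?_, ?_⟩
    · rw [hldef, List.nodup_append]
      exact ⟨hnd', List.nodup_singleton _, by simp; intro a ha h; exact hnotmem (h ▸ ha)⟩
    · rw [hldef, List.toFinset_append, htf']
      simp only [List.toFinset_cons, List.toFinset_nil, insert_empty_eq]
      rw [Finset.union_comm, ← Finset.insert_eq]
      conv_rhs => rw [← Finset.insert_erase hI₀S]
      rw [Finset.image_insert]
    · intro i
      have hilt : (i : ℕ) < l'.length + 1 := by
        have := i.isLt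
        omega
      rcases lt_or_eq_of_le (Nat.lt_succ_iff.mp hilt) with him | him
      · -- old index
        obtain ⟨s, hs1, hs2⟩ := hprop' ⟨(i : ℕ), him⟩
        refine ⟨s, ?_, ?_⟩
        · have := hget_left (i : ℕ) him
          rw [show (⟨(i:ℕ), by omega⟩ : Fin l.length) = i from Fin.ext rfl] at this
          rw [this]
          exact hs1
        · intro j hj
          have hjlt : (j : ℕ) < l'.length := by omega
          have hi := hget_left (i : ℕ) him
          have hjj := hget_left (j : ℕ) hjlt
          rw [show (⟨(i:ℕ), by omega⟩ : Fin l.length) = i from Fin.ext rfl] at hi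
          rw [show (⟨(j:ℕ), by omega⟩ : Fin l.length) = j from Fin.ext rfl] at hjj
          rw [hi, hjj]
          exact hs2 ⟨(j : ℕ), hjlt⟩ hj
      · -- last index
        set u₀ := (∑ i ∈ I₀, i + ∑ i ∈ J, i) % r with hu₀def
        set s := nth I₀ u₀ with hsdef
        have hsmem : s ∈ I₀ := nth_mem I₀ (by rw [hI₀card]; exact hI₀u)
        have higet : l.get i = σ₀ := by
          rw [show i = (⟨l'.length, by omega⟩ : Fin l.length) from Fin.ext him]
          exact hget_last
        refine ⟨s, ?_, ?_⟩
        · rw [higet]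
          exact Finset.mem_inter.mpr ⟨Finset.mem_union_left _ hsmem, hI₀sub hsmem⟩
        · intro j hj
          have hjlt : (j : ℕ) < l'.length := by omega
          have hjj := hget_left (j : ℕ) hjlt
          rw [show (⟨(j:ℕ), by omega⟩ : Fin l.length) = j from Fin.ext rfl] at hjj
          rw [higet, hjj]
          intro hcon
          -- l'.get _ ∈ image
          have hmem : l'.get ⟨(j:ℕ), hjlt⟩ ∈ l'.toFinset :=
            List.mem_toFinset.mpr (List.get_mem l' _)
          rw [htf'] at hmem
          obtain ⟨I', hI'mem, hI'eq⟩ := Finset.mem_image.mp hmem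
          obtain ⟨hI'sub, hI'card, hI'u⟩ := hSP I' (Finset.mem_of_mem_erase hI'mem)
          have hne : I' ≠ I₀ := Finset.ne_of_mem_erase hI'mem
          -- I₀ \ {s} ⊆ I'
          have hsub2 : I₀ \ {s} ⊆ I' := by
            intro x hx
            rw [Finset.mem_sdiff, Finset.mem_singleton] at hx
            have hxσ : x ∈ σ₀ \ {s} := by
              rw [Finset.mem_sdiff, Finset.mem_singleton]
              exact ⟨Finset.mem_union_left _ hx.1, hx.2⟩
            have := hcon hxσ
            rw [← hI'eq] at this
            rcases Finset.mem_union.mp this with h | h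
            · exact h
            · have hxr := hI₀sub hx.1
              rw [Finset.mem_Icc] at hxr
              have := hJ x h
              omega
          have hphi : Phi r k (∑ i ∈ J, i) I' < Phi r k (∑ i ∈ J, i) I₀ :=
            core r k (∑ i ∈ J, i) hk hkr I₀ I' hI₀sub hI'sub hI₀card hI'card hI₀u hI'u hne hsub2
          have := hI₀min I' (Finset.mem_of_mem_erase hI'mem)
          omega


lemma Sset_one (r : ℕ) : Sset r 1 = Finset.Icc 1 r := by
  simp [Sset]

lemma gamma_eq (r d k : ℕ) (hd : 1 ≤ d) (hk : 1 ≤ k) (hkr : k ≤ r) (J : Finset ℕ)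
    (hJ : J ⊆ Finset.Icc (r+1) (r*d)) (hJcard : J.card = r - k) :
    GammaEdges r d k J = (((Finset.Icc 1 r).powersetCard k).filter
      (fun I => (∑ i ∈ I, i + ∑ i ∈ J, i) % r < k)).image (fun I => I ∪ J) := by
  have hJhigh : ∀ y ∈ J, r + 1 ≤ y := fun y hy => (Finset.mem_Icc.mp (hJ hy)).1
  apply Finset.Subset.antisymm
  · -- Gamma ⊆ image
    intro σ hσ
    rw [GammaEdges, Finset.mem_filter] at hσ
    obtain ⟨hσΩ, hσI, hσJ⟩ := hσ
    simp only [OmegaEdges, Finset.mem_filter, Finset.mem_powersetCard] at hσΩ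
    obtain ⟨⟨hσsub, hσcard⟩, t, ht, x, hxσ, hfc, hsum, hxS⟩ := hσΩ
    rw [Sset_one, Finset.mem_Icc] at hxS
    set I : Finset ℕ := σ ∩ Finset.Icc 1 r with hIdef
    have hIsub : I ⊆ Finset.Icc 1 r := Finset.inter_subset_right
    have hxI : x ∈ I := Finset.mem_inter.mpr ⟨hxσ, Finset.mem_Icc.mpr hxS⟩
    have hσeq : σ = I ∪ J := by
      rw [← hσJ]
      ext y
      simp only [hIdef, Finset.mem_union, Finset.mem_inter, Finset.mem_sdiff]
      tauto
    have hdisj : Disjoint I J := by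
      rw [Finset.disjoint_left]
      intro y hyI hyJ
      have h1 := (Finset.mem_Icc.mp (hIsub hyI)).2
      have h2 := hJhigh y hyJ
      omega
    have hsum2 : ∑ i ∈ σ, i = ∑ i ∈ I, i + ∑ i ∈ J, i := by
      rw [hσeq, Finset.sum_union hdisj]
    have hult : (∑ i ∈ I, i + ∑ i ∈ J, i) % r < k := by
      rw [← hsum2, hsum]
      have hfsub : σ.filter (· < x) ⊆ I.erase x := by
        intro y hy
        rw [Finset.mem_filter] at hy
        rw [Finset.mem_erase]
        have hy1 : 1 ≤ y := (Finset.mem_Icc.mp (hσsub hy.1)).1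
        refine ⟨by omega, Finset.mem_inter.mpr ⟨hy.1, Finset.mem_Icc.mpr ⟨hy1, by omega⟩⟩⟩
      have hcle : (σ.filter (· < x)).card ≤ I.card - 1 := by
        calc _ ≤ (I.erase x).card := Finset.card_le_card hfsub
          _ = I.card - 1 := Finset.card_erase_of_mem hxI
      rw [hσI] at hcle
      rw [← hfc]
      omega
    rw [Finset.mem_image]
    refine ⟨I, ?_, hσeq.symm⟩
    rw [Finset.mem_filter, Finset.mem_powersetCard]
    exact ⟨⟨hIsub, hσI⟩, hult⟩
  · -- image ⊆ Gamma
    intro σ hσ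
    rw [Finset.mem_image] at hσ
    obtain ⟨I, hImem, hIσ⟩ := hσ
    rw [Finset.mem_filter, Finset.mem_powersetCard] at hImem
    obtain ⟨⟨hIsub, hIcard⟩, hIu⟩ := hImem
    have hdisj : Disjoint I J := by
      rw [Finset.disjoint_left]
      intro y hyI hyJ
      have h1 := (Finset.mem_Icc.mp (hIsub hyI)).2
      have h2 := hJhigh y hyJ
      omega
    have hsum2 : ∑ i ∈ σ, i = ∑ i ∈ I, i + ∑ i ∈ J, i := by
      rw [← hIσ, Finset.sum_union hdisj]
    set u := (∑ i ∈ I, i + ∑ i ∈ J, i) % r with hudef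
    have huk : u < I.card := by rw [hIcard]; exact hIu
    set x := nth I u with hxdef
    have hxI : x ∈ I := nth_mem I huk
    have hxr : 1 ≤ x ∧ x ≤ r := Finset.mem_Icc.mp (hIsub hxI)
    rw [GammaEdges, Finset.mem_filter]
    refine ⟨?_, ?_, ?_⟩
    · simp only [OmegaEdges, Finset.mem_filter, Finset.mem_powersetCard]
      refine ⟨⟨?_, ?_⟩, u + 1, ?_, x, ?_, ?_, ?_, ?_⟩
      · -- σ ⊆ Icc 1 (r*d)
        rw [← hIσ]
        apply Finset.union_subset
        · apply Finset.Subset.trans hIsub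
          apply Finset.Icc_subset_Icc le_rfl
          calc r = r * 1 := by ring
            _ ≤ r * d := Nat.mul_le_mul_left r hd
        · apply Finset.Subset.trans hJ
          apply Finset.Icc_subset_Icc _ le_rfl
          omega
      · rw [← hIσ, Finset.card_union_of_disjoint hdisj, hIcard, hJcard]
        omega
      · rw [Finset.mem_Icc]
        omega
      · rw [← hIσ]
        exact Finset.mem_union_left _ hxI
      · -- filter count = u
        have hfeq : σ.filter (· < x) = I.filter (fun y => y < x) := by
          rw [← hIσ]
          ext y
          simp only [Finset.mem_filter, Finset.mem_union]
          constructor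
          · rintro ⟨h1 | h1, h2⟩
            · exact ⟨h1, h2⟩
            · have := hJhigh y h1
              omega
          · rintro ⟨h1, h2⟩
            exact ⟨Or.inl h1, h2⟩
        have hfeq2 : I.filter (fun y => y < x) = (I.filter (fun y => y ≤ x)).erase x := by
          ext y
          simp only [Finset.mem_filter, Finset.mem_erase]
          constructor
          · rintro ⟨h1, h2⟩
            exact ⟨by omega, h1, by omega⟩
          · rintro ⟨h1, h2, h3⟩
            exact ⟨h2, by omega⟩
        have hxmem : x ∈ I.filter (fun y => y ≤ x) := Finset.mem_filter.mpr ⟨hxI, le_rfl⟩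
        rw [hfeq, hfeq2, Finset.card_erase_of_mem hxmem]
        have hcc : (I.filter (fun y => y ≤ x)).card = u + 1 := cnt_nth I huk
        omega
      · rw [hsum2]
        omega
      · rw [Sset_one, Finset.mem_Icc]
        omega
    · rw [← hIσ, recover r J hJhigh I hIsub]
      exact hIcard
    · rw [← hIσ]
      ext y
      simp only [Finset.mem_sdiff, Finset.mem_union, Finset.mem_Icc]
      constructor
      · rintro ⟨h1 | h1, h2⟩
        · exact absurd (Finset.mem_Icc.mp (hIsub h1)) h2
        · exact h1
      · intro hy
        have := hJhigh y hy
        exact ⟨Or.inr hy, by omega⟩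


end Stmt12Aux

/-- `Γ_{k,r}(j_{k+1},...,j_r)` is leaf-equivalent to the empty `r`-uniform
hypergraph, via faces containing all of `j_{k+1},...,j_r`: there is an enumeration
`σ_1,...,σ_n` of its hyperedges such that each `σ_i` has `s ∈ σ_i ∩ {1,...,r}` with
`σ_i \ {s}` not contained in any earlier `σ_j`. -/
theorem stmt12 (r d k : ℕ) (hd : 1 ≤ d) (hk : 1 ≤ k) (hkr : k ≤ r)
    (J : Finset ℕ) (hJ : J ⊆ Finset.Icc (r + 1) (r * d)) (hJcard : J.card = r - k) :
    ∃ l : List (Finset ℕ), l.Nodup ∧ l.toFinset = GammaEdges r d k J ∧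
      ∀ i : Fin l.length, ∃ s ∈ l.get i ∩ Finset.Icc 1 r,
        ∀ j : Fin l.length, (j : ℕ) < (i : ℕ) → ¬ (l.get i \ {s} ⊆ l.get j) := by
  have hJhigh : ∀ y ∈ J, r + 1 ≤ y := fun y hy => (Finset.mem_Icc.mp (hJ hy)).1
  obtain ⟨l, h1, h2, h3⟩ := buildList r k J hk hkr hJhigh
    (((Finset.Icc 1 r).powersetCard k).filter
      (fun I => (∑ i ∈ I, i + ∑ i ∈ J, i) % r < k)).card
    (((Finset.Icc 1 r).powersetCard k).filter
      (fun I => (∑ i ∈ I, i + ∑ i ∈ J, i) % r < k)) rfl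
    (by
      intro I hI
      simp only [Finset.mem_filter, Finset.mem_powersetCard] at hI
      exact ⟨hI.1.1, hI.1.2, hI.2⟩)
  refine ⟨l, h1, ?_, h3⟩
  rw [h2, ← gamma_eq r d k hd hk hkr J hJ hJcard]
end

section
/- Let V be a finite linearly ordered set, let E be a finite family of k-element subsets of V, and suppose σ ∈ E and s ∈ σ are such that σ ∖ {s} is not a subset of any τ ∈ E with τ ≠ σ. Then every element c of the kernel of the simplicial boundary map ∂ on the free ℚ-vector space with basis E has coefficient 0 at σ. Consequently, the kernel of ∂ on the span of E equals the kernel of ∂ on the span of E ∖ {σ}; in particular, if a k-uniform hypergraph Γ is leaf-equivalent to Γ ∖ {σ}, then b_{k−1}(Γ) = b_{k−1}(Γ ∖ {σ}). -/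
open Finset
open scoped Classical

/-- if `σ ∈ E` has a face `σ \ {s}` not contained in any other member of
`E` (a family of `k`-element subsets of a finite set `V ⊆ ℕ`), then every cycle supported
on `E` has coefficient `0` at `σ`; consequently the cycle space of `E` equals that of
`E \ {σ}`, and in particular the top Betti numbers agree. -/
theorem stmt13 (k : ℕ) (V : Finset ℕ) (E : Finset (Finset ℕ))
    (hE : ∀ τ ∈ E, τ.card = k ∧ τ ⊆ V)
    (σ : Finset ℕ) (hσ : σ ∈ E) (s : ℕ) (hs : s ∈ σ)
    (hleaf : ∀ τ ∈ E, τ ≠ σ → ¬ (σ \ {s} ⊆ τ)) :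
    (∀ c : Finset ℕ →₀ ℚ, (↑c.support : Set (Finset ℕ)) ⊆ ↑E →
      boundaryMap c = 0 → c σ = 0) ∧
    cycleSpace E = cycleSpace (E.erase σ) ∧
    Module.finrank ℚ (cycleSpace E) = Module.finrank ℚ (cycleSpace (E.erase σ)) := by

  have key : ∀ c : Finset ℕ →₀ ℚ, (↑c.support : Set (Finset ℕ)) ⊆ ↑E →
      boundaryMap c = 0 → c σ = 0 := by
    intro c hsupp hc
    by_cases hσs : σ ∈ c.support
    · -- evaluate boundary at the face σ.erase s
      have heval : (boundaryMap c) (σ.erase s)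
          = ∑ τ ∈ c.support, c τ * (boundaryOf τ) (σ.erase s) := by
        unfold boundaryMap
        rw [Finsupp.lsum_apply, Finsupp.sum_apply]
        rw [Finsupp.sum]
        apply Finset.sum_congr rfl
        intro τ _
        simp [LinearMap.toSpanSingleton_apply]
      have hzero : ∀ τ ∈ c.support, τ ≠ σ → (boundaryOf τ) (σ.erase s) = 0 := by
        intro τ hτ hne
        have hτE : τ ∈ E := hsupp hτ
        unfold boundaryOf
        rw [Finsupp.finset_sum_apply]
        apply Finset.sum_eq_zero
        intro t _
        rw [Finsupp.smul_apply, Finsupp.single_apply]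
        rw [if_neg, smul_zero]
        intro heq
        apply hleaf τ hτE hne
        rw [Finset.sdiff_singleton_eq_erase, ← heq]
        exact Finset.erase_subset _ _
      have hσval : (boundaryOf σ) (σ.erase s)
          = (-1 : ℚ) ^ ((σ.filter (· < s)).card) := by
        unfold boundaryOf
        rw [Finsupp.finset_sum_apply]
        rw [Finset.sum_eq_single s]
        · simp
        · intro t _ hts
          rw [Finsupp.smul_apply, Finsupp.single_apply, if_neg, smul_zero]
          intro heq
          have hmem : s ∈ σ.erase t := Finset.mem_erase.2 ⟨Ne.symm hts, hs⟩
          rw [heq] at hmem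
          exact (Finset.notMem_erase s σ) hmem
        · intro h; exact absurd hs h
      have : (0 : ℚ) = c σ * (-1 : ℚ) ^ ((σ.filter (· < s)).card) := by
        have := heval
        rw [hc] at this
        simp only [Finsupp.coe_zero, Pi.zero_apply] at this
        rw [this, Finset.sum_eq_single σ]
        · rw [hσval]
        · intro τ hτ hne
          rw [hzero τ hτ hne, mul_zero]
        · intro h; exact absurd hσs h
      have hne : ((-1 : ℚ) ^ ((σ.filter (· < s)).card)) ≠ 0 := by
        apply pow_ne_zero; norm_num
      field_simp at this
      exact (mul_eq_zero.1 this.symm).resolve_right hne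
    · exact Finsupp.notMem_support_iff.1 hσs
  refine ⟨key, ?_, ?_⟩
  · have hEq : cycleSpace E = cycleSpace (E.erase σ) := by
      apply le_antisymm
      · rintro c ⟨hsupp, hker⟩
        have hsupp' : (↑c.support : Set (Finset ℕ)) ⊆ ↑E := hsupp
        have hc0 : c σ = 0 := key c hsupp' (LinearMap.mem_ker.1 hker)
        refine ⟨?_, hker⟩
        intro τ hτ
        have hτs : τ ∈ c.support := hτ
        have hτE : τ ∈ E := hsupp' hτs
        have hne : τ ≠ σ := by
          intro h; subst h
          exact (Finsupp.mem_support_iff.1 hτs) hc0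
        simp only [Finset.coe_erase, Set.mem_diff, Set.mem_singleton_iff]
        exact ⟨hτE, hne⟩
      · rintro c ⟨hsupp, hker⟩
        refine ⟨?_, hker⟩
        intro τ hτ
        have := hsupp hτ
        simp only [Finset.coe_erase, Set.mem_diff] at this
        exact this.1
    exact hEq
  · have hEq : cycleSpace E = cycleSpace (E.erase σ) := by
      apply le_antisymm
      · rintro c ⟨hsupp, hker⟩
        have hsupp' : (↑c.support : Set (Finset ℕ)) ⊆ ↑E := hsupp
        have hc0 : c σ = 0 := key c hsupp' (LinearMap.mem_ker.1 hker)
        refine ⟨?_, hker⟩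
        intro τ hτ
        have hτs : τ ∈ c.support := hτ
        have hτE : τ ∈ E := hsupp' hτs
        have hne : τ ≠ σ := by
          intro h; subst h
          exact (Finsupp.mem_support_iff.1 hτs) hc0
        simp only [Finset.coe_erase, Set.mem_diff, Set.mem_singleton_iff]
        exact ⟨hτE, hne⟩
      · rintro c ⟨hsupp, hker⟩
        refine ⟨?_, hker⟩
        intro τ hτ
        have := hsupp hτ
        simp only [Finset.coe_erase, Set.mem_diff] at this
        exact this.1
    rw [hEq]
end

section
/- Let V be a finite linearly ordered set and let E be a finite family of k-element subsets of V. If the k-uniform hypergraph with hyperedge set E is leaf-equivalent to the empty k-uniform hypergraph, then the simplicial boundary map ∂ on the free ℚ-vector space with basis E is injective; that is, b_{k−1} of the hypergraph is 0. -/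
open Finset
open scoped Classical

/-- The space of top-dimensional cycles of the hypergraph with hyperedge set `E`:
elements of the span of `E` killed by the boundary map.  Its dimension is the top
Betti number. -/

lemma boundaryOf_apply (σ τ : Finset ℕ) :
    boundaryOf σ τ = ∑ s ∈ σ, ((-1 : ℚ) ^ ((σ.filter (· < s)).card)) *
      (if σ.erase s = τ then (1 : ℚ) else 0) := by
  unfold boundaryOf
  rw [Finset.sum_apply']
  refine Finset.sum_congr rfl fun s hs => ?_
  rw [Finsupp.smul_apply, Finsupp.single_apply, smul_eq_mul]

lemma boundaryOf_apply_of_not_subset {σ τ : Finset ℕ} (h : ¬ τ ⊆ σ) :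
    boundaryOf σ τ = 0 := by
  rw [boundaryOf_apply]
  refine Finset.sum_eq_zero fun s hs => ?_
  rw [if_neg, mul_zero]
  rintro rfl
  exact h (Finset.erase_subset _ _)

lemma boundaryOf_apply_erase {σ : Finset ℕ} {s₀ : ℕ} (hs₀ : s₀ ∈ σ) :
    boundaryOf σ (σ.erase s₀) = (-1 : ℚ) ^ ((σ.filter (· < s₀)).card) := by
  rw [boundaryOf_apply, Finset.sum_eq_single s₀]
  · rw [if_pos rfl, mul_one]
  · intro s hs hne
    rw [if_neg, mul_zero]
    intro heq
    have h1 : s₀ ∈ σ.erase s := Finset.mem_erase.mpr ⟨fun h => hne h.symm, hs₀⟩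
    rw [heq] at h1
    exact (Finset.mem_erase.mp h1).1 rfl
  · intro h; exact absurd hs₀ h

lemma boundaryMap_apply (c : Finset ℕ →₀ ℚ) (τ : Finset ℕ) :
    boundaryMap c τ = ∑ σ ∈ c.support, c σ * boundaryOf σ τ := by
  simp [boundaryMap, Finsupp.lsum_apply, Finsupp.sum_apply, Finsupp.sum,
    LinearMap.toSpanSingleton_apply, Finsupp.smul_apply, smul_eq_mul]

lemma main_aux (l : List (Finset ℕ)) (hnd : l.Nodup)
    (hleaf : ∀ i : Fin l.length, ∃ s ∈ l.get i,
      ∀ j : Fin l.length, (j : ℕ) < (i : ℕ) → ¬ (l.get i \ {s} ⊆ l.get j)) :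
    ∀ c : Finset ℕ →₀ ℚ, (↑c.support : Set (Finset ℕ)) ⊆ ↑l.toFinset →
      boundaryMap c = 0 → c = 0 := by
  induction l using List.reverseRecOn with
  | nil =>
    intro c hc _
    have : c.support ⊆ (∅ : Finset (Finset ℕ)) := by
      intro x hx
      simpa using hc hx
    exact Finsupp.support_eq_empty.mp (Finset.subset_empty.mp this)
  | append_singleton l σ IH =>
    intro c hc hbc
    have hσnotmem : σ ∉ l := by
      have := List.nodup_append.mp hnd
      exact fun hm => this.2.2 σ hm σ (List.mem_singleton_self σ) rfl
    have hndl : l.Nodup := (List.nodup_append.mp hnd).1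
    -- the leaf of the last edge σ
    have hlen : l.length < (l ++ [σ]).length := by simp
    obtain ⟨s, hsmem, hfree⟩ := hleaf ⟨l.length, hlen⟩
    have hget : (l ++ [σ]).get ⟨l.length, hlen⟩ = σ := by
      simp [List.getElem_append_right]
    rw [hget] at hsmem hfree
    -- no earlier edge contains σ.erase s
    have hfree' : ∀ ρ ∈ l, ¬ (σ.erase s ⊆ ρ) := by
      intro ρ hρ
      obtain ⟨j, hj⟩ := List.mem_iff_get.mp hρ
      have hjl := j.isLt
      have hj' : (j : ℕ) < (l ++ [σ]).length := by simp
      have hle := hfree ⟨(j : ℕ), hj'⟩ (by simpa using hjl)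
      have hgj : (l ++ [σ]).get ⟨(j : ℕ), hj'⟩ = ρ := by
        rw [List.get_eq_getElem, List.getElem_append_left hjl]
        rw [← hj, List.get_eq_getElem]
      rw [hgj] at hle
      rw [Finset.erase_eq]
      exact hle
    -- c σ = 0
    have hcσ : c σ = 0 := by
      by_contra hne
      have hσsupp : σ ∈ c.support := Finsupp.mem_support_iff.mpr hne
      have h0 : boundaryMap c (σ.erase s) = 0 := by rw [hbc]; rfl
      rw [boundaryMap_apply] at h0
      rw [Finset.sum_eq_single_of_mem σ hσsupp] at h0
      · rw [boundaryOf_apply_erase hsmem] at h0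
        have : c σ = 0 := by
          have hpow : ((-1 : ℚ) ^ ((σ.filter (· < s)).card)) ≠ 0 := by
            apply pow_ne_zero; norm_num
          exact (mul_eq_zero.mp h0).resolve_right hpow
        exact hne this
      · intro ρ hρ hρne
        have hρl : ρ ∈ l := by
          have h1 : ρ ∈ (l ++ [σ]).toFinset := hc hρ
          rw [List.mem_toFinset, List.mem_append] at h1
          rcases h1 with h1 | h1
          · exact h1
          · simp at h1; exact absurd h1 hρne
        rw [boundaryOf_apply_of_not_subset (hfree' ρ hρl), mul_zero]
    -- support of c is inside l.toFinset
    have hc' : (↑c.support : Set (Finset ℕ)) ⊆ ↑l.toFinset := by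
      intro ρ hρ
      have hρs : ρ ∈ c.support := hρ
      have := hc hρ
      have hρm : ρ ∈ (l ++ [σ]).toFinset := by exact_mod_cast this
      rw [List.mem_toFinset, List.mem_append] at hρm
      rcases hρm with h1 | h1
      · exact List.mem_toFinset.mpr h1
      · simp at h1
        subst h1
        exact absurd hcσ (Finsupp.mem_support_iff.mp hρs)
    -- restricted leaf property
    have hleaf' : ∀ i : Fin l.length, ∃ s ∈ l.get i,
        ∀ j : Fin l.length, (j : ℕ) < (i : ℕ) → ¬ (l.get i \ {s} ⊆ l.get j) := by
      intro i
      have hi : (i : ℕ) < (l ++ [σ]).length := by simp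
      obtain ⟨t, htmem, htf⟩ := hleaf ⟨i, hi⟩
      have hgi : (l ++ [σ]).get ⟨(i : ℕ), hi⟩ = l.get i := by
        rw [List.get_eq_getElem, List.getElem_append_left i.isLt, List.get_eq_getElem]
      rw [hgi] at htmem htf
      refine ⟨t, htmem, fun j hj => ?_⟩
      have hj' : ((j : ℕ)) < (l ++ [σ]).length := by simp
      have := htf ⟨j, hj'⟩ hj
      have hgj : (l ++ [σ]).get ⟨(j : ℕ), hj'⟩ = l.get j := by
        rw [List.get_eq_getElem, List.getElem_append_left j.isLt, List.get_eq_getElem]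
      rwa [hgj] at this
    exact IH hndl hleaf' c hc' hbc

/-- if the `k`-uniform hypergraph with hyperedge set `E` (a family of
`k`-element subsets of a finite set `V ⊆ ℕ`) is leaf-equivalent to the empty hypergraph,
then the boundary map is injective on the span of `E`; i.e. its top Betti number is `0`. -/
theorem stmt14 (k : ℕ) (V : Finset ℕ) (E : Finset (Finset ℕ))
    (hE : ∀ τ ∈ E, τ.card = k ∧ τ ⊆ V)
    (h : LeafEquivToEmpty E) :
    (∀ c : Finset ℕ →₀ ℚ, (↑c.support : Set (Finset ℕ)) ⊆ ↑E →
      boundaryMap c = 0 → c = 0) ∧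
    cycleSpace E = ⊥ := by
  obtain ⟨l, hnd, hlE, hleaf⟩ := h
  have main := main_aux l hnd hleaf
  rw [hlE] at main
  refine ⟨main, ?_⟩
  rw [eq_bot_iff]
  intro x hx
  obtain ⟨hx1, hx2⟩ := Submodule.mem_inf.mp hx
  have h1 := Finsupp.mem_supported ℚ x |>.mp hx1
  have h2 := LinearMap.mem_ker.mp hx2
  exact Submodule.mem_bot ℚ |>.mpr (main x h1 h2)
end

section
/- The r-uniform hypergraph Ω_1^{(r,d)} is leaf-equivalent to the empty r-uniform hypergraph: there is an enumeration σ_1,…,σ_N of the hyperedges of Ω_1^{(r,d)} such that for every 1 ≤ i ≤ N there exists s ∈ σ_i with σ_i ∖ {s} not a subset of σ_j for all j < i. -/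
open Finset
open scoped Classical

/-! ### Auxiliary material for Statement 16 -/

lemma sum_range_two_pow (n : ℕ) : ∑ v ∈ Finset.range n, 2 ^ v = 2 ^ n - 1 := by
  induction n with
  | zero => simp
  | succ n ih =>
    rw [Finset.sum_range_succ, ih]
    have h1 : 1 ≤ 2 ^ n := Nat.one_le_two_pow
    have h2 : 2 ^ (n + 1) = 2 ^ n * 2 := pow_succ 2 n
    omega

lemma sum_two_pow_lt {r : ℕ} (hr : 1 ≤ r) {T : Finset ℕ} (hT : ∀ v ∈ T, v ≤ r) :
    ∑ v ∈ T, 2 ^ v < 4 ^ r := by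
  have h1 : T ⊆ Finset.range (r + 1) :=
    fun v hv => Finset.mem_range.2 (Nat.lt_succ_of_le (hT v hv))
  have h2 : ∑ v ∈ T, 2 ^ v ≤ ∑ v ∈ Finset.range (r + 1), 2 ^ v :=
    Finset.sum_le_sum_of_subset h1
  rw [sum_range_two_pow] at h2
  have h3 : 2 ^ (r + 1) ≤ 4 ^ r := by
    calc 2 ^ (r + 1) ≤ 2 ^ (2 * r) := Nat.pow_le_pow_right (by norm_num) (by omega)
      _ = 4 ^ r := by rw [pow_mul]; norm_num
  have h4 : 1 ≤ 2 ^ (r + 1) := Nat.one_le_two_pow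
  omega

/-- The distinguished vertex of a hyperedge of `Ω_1^{(r,d)}`: the element `x ∈ σ`
with exactly `(∑ σ) % r` smaller elements of `σ`, which lies in `{1,…,r}`. -/
noncomputable def xOf (r : ℕ) (σ : Finset ℕ) : ℕ :=
  if h : ∃ x, x ∈ σ ∧ (σ.filter (· < x)).card = (∑ i ∈ σ, i) % r ∧ 1 ≤ x ∧ x ≤ r
  then h.choose else 0

lemma mem_omega_iff {r d : ℕ} (hr : 1 ≤ r) {σ : Finset ℕ} :
    σ ∈ OmegaEdges r d 1 ↔ σ ⊆ Finset.Icc 1 (r * d) ∧ σ.card = r ∧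
      ∃ x, x ∈ σ ∧ (σ.filter (· < x)).card = (∑ i ∈ σ, i) % r ∧ 1 ≤ x ∧ x ≤ r := by
  simp only [OmegaEdges, Finset.mem_filter, Finset.mem_powersetCard]
  constructor
  · rintro ⟨⟨hsub, hcard⟩, t, ht, x, hx, h1, h2, h3⟩
    have h3' : 1 ≤ x ∧ x ≤ r := by simpa [Sset, Finset.mem_Icc] using h3
    exact ⟨hsub, hcard, x, hx, h1.trans h2.symm, h3'.1, h3'.2⟩
  · rintro ⟨hsub, hcard, x, hx, hc, hx1, hxr⟩
    have hmod : (∑ i ∈ σ, i) % r < r := Nat.mod_lt _ (by omega)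
    refine ⟨⟨hsub, hcard⟩, (∑ i ∈ σ, i) % r + 1,
      Finset.mem_Icc.2 ⟨by omega, by omega⟩, x, hx, by simpa using hc, by simp, ?_⟩
    simp only [Sset, Finset.mem_Icc]
    omega

lemma xOf_spec {r d : ℕ} (hr : 1 ≤ r) {σ : Finset ℕ} (hσ : σ ∈ OmegaEdges r d 1) :
    xOf r σ ∈ σ ∧ (σ.filter (· < xOf r σ)).card = (∑ i ∈ σ, i) % r ∧
      1 ≤ xOf r σ ∧ xOf r σ ≤ r := by
  have h := ((mem_omega_iff hr).1 hσ).2.2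
  rw [xOf, dif_pos h]
  exact h.choose_spec

/-- The measure used to order the hyperedges of `Ω_1^{(r,d)}`. -/
noncomputable def fMeas (r : ℕ) (σ : Finset ℕ) : ℕ :=
  (r - (σ.filter (· ≤ r)).card) * 4 ^ r +
    (4 ^ r - ∑ v ∈ σ.filter (fun v => v ≤ r ∧ xOf r σ ≤ v), 2 ^ v)

lemma fMeas_lt {r d : ℕ} (hr : 1 ≤ r) {σ σ' : Finset ℕ}
    (hσ : σ ∈ OmegaEdges r d 1) (hσ' : σ' ∈ OmegaEdges r d 1) (hne : σ ≠ σ')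
    (hsub0 : σ \ {xOf r σ} ⊆ σ') : fMeas r σ < fMeas r σ' := by
  obtain ⟨hσsub, hσcard, -⟩ := (mem_omega_iff (d := d) hr).1 hσ
  obtain ⟨hσ'sub, hσ'card, -⟩ := (mem_omega_iff (d := d) hr).1 hσ'
  obtain ⟨hxmem, hxcard, hx1, hxr⟩ := xOf_spec (d := d) hr hσ
  obtain ⟨hx'mem, hx'card, hx'1, hx'r⟩ := xOf_spec (d := d) hr hσ'
  show (r - (σ.filter (· ≤ r)).card) * 4 ^ r +
      (4 ^ r - ∑ v ∈ σ.filter (fun v => v ≤ r ∧ xOf r σ ≤ v), 2 ^ v) <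
    (r - (σ'.filter (· ≤ r)).card) * 4 ^ r +
      (4 ^ r - ∑ v ∈ σ'.filter (fun v => v ≤ r ∧ xOf r σ' ≤ v), 2 ^ v)
  set x := xOf r σ with hxdef
  set x' := xOf r σ' with hx'def
  set t := (∑ i ∈ σ, i) % r with htdef
  set t' := (∑ i ∈ σ', i) % r with ht'def
  set T := σ.filter (fun v => v ≤ r ∧ x ≤ v) with hTdef
  set T' := σ'.filter (fun v => v ≤ r ∧ x' ≤ v) with hT'def
  set k := (σ.filter (· ≤ r)).card with hkdef
  set k' := (σ'.filter (· ≤ r)).card with hk'def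
  -- basic structure: σ' = insert y (σ.erase x) for some y ∉ σ
  rw [Finset.sdiff_singleton_eq_erase] at hsub0
  have hec : (σ.erase x).card = r - 1 := by
    rw [Finset.card_erase_of_mem hxmem, hσcard]
  have hsdc : (σ' \ σ.erase x).card = 1 := by
    rw [Finset.card_sdiff_of_subset hsub0, hσ'card, hec]; omega
  obtain ⟨y, hy⟩ := Finset.card_eq_one.1 hsdc
  have hσ'eq : σ' = insert y (σ.erase x) := by
    have h1 := Finset.sdiff_union_of_subset hsub0
    rw [hy] at h1
    rw [← h1]
    exact (Finset.insert_eq y (σ.erase x)).symm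
  have hynotin : y ∉ σ.erase x := by
    have hy2 : y ∈ σ' \ σ.erase x := by rw [hy]; exact Finset.mem_singleton_self y
    exact (Finset.mem_sdiff.1 hy2).2
  have hyσ' : y ∈ σ' := by rw [hσ'eq]; exact Finset.mem_insert_self y _
  have hxnot : x ∉ σ' := by
    intro hx'in
    apply hne
    apply Finset.eq_of_subset_of_card_le
    · intro z hz
      by_cases hzx : z = x
      · rwa [hzx]
      · exact hsub0 (Finset.mem_erase.2 ⟨hzx, hz⟩)
    · rw [hσcard, hσ'card]
  have hyx : y ≠ x := fun h => hxnot (h ▸ hyσ')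
  have hyσ : y ∉ σ := fun h => hynotin (Finset.mem_erase.2 ⟨hyx, h⟩)
  have hsum : (∑ i ∈ σ', i) + x = (∑ i ∈ σ, i) + y := by
    have h1 : x + ∑ i ∈ σ.erase x, i = ∑ i ∈ σ, i :=
      Finset.add_sum_erase σ (fun i => i) hxmem
    have h2 : ∑ i ∈ σ', i = y + ∑ i ∈ σ.erase x, i := by
      rw [hσ'eq, Finset.sum_insert hynotin]
    omega
  have ht_lt_x : t < x := by
    have hss : σ.filter (· < x) ⊆ Finset.Ico 1 x := by
      intro z hz
      rw [Finset.mem_filter] at hz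
      exact Finset.mem_Ico.2 ⟨(Finset.mem_Icc.1 (hσsub hz.1)).1, hz.2⟩
    have hle := Finset.card_le_card hss
    rw [hxcard, Nat.card_Ico] at hle
    omega
  have hxk : x ∈ σ.filter (· ≤ r) := Finset.mem_filter.2 ⟨hxmem, hxr⟩
  have hk1 : 1 ≤ k := Finset.card_pos.2 ⟨x, hxk⟩
  have hk_le : k ≤ r := by
    have hss : σ.filter (· ≤ r) ⊆ Finset.Icc 1 r := by
      intro z hz
      rw [Finset.mem_filter] at hz
      exact Finset.mem_Icc.2 ⟨(Finset.mem_Icc.1 (hσsub hz.1)).1, hz.2⟩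
    have hle := Finset.card_le_card hss
    rw [Nat.card_Icc, Nat.add_sub_cancel] at hle
    rw [hkdef]
    exact hle
  have hxT : x ∈ T := Finset.mem_filter.2 ⟨hxmem, hxr, le_refl x⟩
  have hTsub : ∀ v ∈ T, v ≤ r := fun v hv => (Finset.mem_filter.1 hv).2.1
  have hT'sub : ∀ v ∈ T', v ≤ r := fun v hv => (Finset.mem_filter.1 hv).2.1
  have hTlt4 : ∑ v ∈ T, 2 ^ v < 4 ^ r := sum_two_pow_lt hr hTsub
  have hT'lt4 : ∑ v ∈ T', 2 ^ v < 4 ^ r := sum_two_pow_lt hr hT'sub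
  have hxTsum : 2 ^ x ≤ ∑ v ∈ T, 2 ^ v :=
    Finset.single_le_sum (fun v _ => Nat.zero_le _) hxT
  have h2x1 : 1 ≤ 2 ^ x := Nat.one_le_two_pow
  by_cases hyr : y ≤ r
  · -- the new vertex `y` is small: `k` is unchanged and the colex value drops
    have hy1 : y ∉ (σ.filter (· ≤ r)).erase x := fun hc =>
      hyσ (Finset.mem_filter.1 (Finset.mem_of_mem_erase hc)).1
    have hk'eq : k' = k := by
      rw [hk'def, hσ'eq, Finset.filter_insert, if_pos hyr, Finset.filter_erase,
        Finset.card_insert_of_notMem hy1, Finset.card_erase_of_mem hxk]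
      omega
    have hcolex : ∑ v ∈ T', 2 ^ v < ∑ v ∈ T, 2 ^ v := by
      rcases Nat.lt_or_ge y x with hylt | hyge
      · -- y < x
        have hT'ss : T' ⊆ T.erase x ∪ Finset.range x := by
          intro v hv
          obtain ⟨hvσ', hvr, -⟩ := Finset.mem_filter.1 hv
          rcases Nat.lt_or_ge v x with h | h
          · exact Finset.mem_union_right _ (Finset.mem_range.2 h)
          · refine Finset.mem_union_left _ (Finset.mem_erase.2 ⟨?_, ?_⟩)
            · rintro rfl; exact hxnot hvσ'
            · have hvy : v ≠ y := by omega
              have hvσ : v ∈ σ := by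
                rw [hσ'eq] at hvσ'
                rcases Finset.mem_insert.1 hvσ' with h' | h'
                · exact absurd h' hvy
                · exact Finset.mem_of_mem_erase h'
              exact Finset.mem_filter.2 ⟨hvσ, hvr, h⟩
        have h1 : ∑ v ∈ T', 2 ^ v ≤ ∑ v ∈ T.erase x ∪ Finset.range x, 2 ^ v :=
          Finset.sum_le_sum_of_subset hT'ss
        have h2 := Finset.sum_union_inter (s₁ := T.erase x) (s₂ := Finset.range x)
          (f := fun v => 2 ^ v)
        have h3 : 2 ^ x + ∑ v ∈ T.erase x, 2 ^ v = ∑ v ∈ T, 2 ^ v :=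
          Finset.add_sum_erase T (fun v => 2 ^ v) hxT
        have h4 : ∑ v ∈ Finset.range x, 2 ^ v = 2 ^ x - 1 := sum_range_two_pow x
        omega
      · -- x < y
        have hxy : x < y := by omega
        have hc_lt : y - x < r := by omega
        have htc_lt : t + (y - x) < r := by omega
        have hsum' : ∑ i ∈ σ', i = (∑ i ∈ σ, i) + (y - x) := by omega
        have ht'val : t' = t + (y - x) := by
          rw [ht'def, hsum', Nat.add_mod, Nat.mod_eq_of_lt hc_lt, ← htdef,
            Nat.mod_eq_of_lt htc_lt]
        have hx'y : y < x' := by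
          by_contra hle
          push_neg at hle
          have hs1 : σ'.filter (· < x') ⊆ σ'.filter (· < y) := by
            intro z hz
            rw [Finset.mem_filter] at hz ⊢
            exact ⟨hz.1, by omega⟩
          have hs2 : σ'.filter (· < y) = (σ.filter (· < y)).erase x := by
            rw [hσ'eq, Finset.filter_insert, if_neg (lt_irrefl y), Finset.filter_erase]
          have hxy' : x ∈ σ.filter (· < y) := Finset.mem_filter.2 ⟨hxmem, hxy⟩
          have hs3 : σ.filter (· < y) ⊆ σ.filter (· < x) ∪ Finset.Ico x y := by
            intro z hz
            rw [Finset.mem_filter] at hz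
            rcases Nat.lt_or_ge z x with h | h
            · exact Finset.mem_union_left _ (Finset.mem_filter.2 ⟨hz.1, h⟩)
            · exact Finset.mem_union_right _ (Finset.mem_Ico.2 ⟨h, hz.2⟩)
          have hc1 : t' ≤ (σ'.filter (· < y)).card := by
            rw [← hx'card]
            exact Finset.card_le_card hs1
          have hc2 : (σ'.filter (· < y)).card = (σ.filter (· < y)).card - 1 := by
            rw [hs2, Finset.card_erase_of_mem hxy']
          have hc3 : (σ.filter (· < y)).card ≤ t + (y - x) := by
            have hle3 := Finset.card_le_card hs3
            have hun := Finset.card_union_le (σ.filter (· < x)) (Finset.Ico x y)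
            have hico : (Finset.Ico x y).card = y - x := Nat.card_Ico x y
            rw [hxcard] at hun
            omega
          have hpos : 0 < (σ.filter (· < y)).card := Finset.card_pos.2 ⟨x, hxy'⟩
          omega
        have hT'ss : T' ⊆ T.erase x := by
          intro v hv
          obtain ⟨hvσ', hvr, hvx'⟩ := Finset.mem_filter.1 hv
          have hvy : v ≠ y := by omega
          have hvσ : v ∈ σ := by
            rw [hσ'eq] at hvσ'
            rcases Finset.mem_insert.1 hvσ' with h' | h'
            · exact absurd h' hvy
            · exact Finset.mem_of_mem_erase h'
          exact Finset.mem_erase.2 ⟨by omega, Finset.mem_filter.2 ⟨hvσ, hvr, by omega⟩⟩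
        have h1 : ∑ v ∈ T', 2 ^ v ≤ ∑ v ∈ T.erase x, 2 ^ v :=
          Finset.sum_le_sum_of_subset hT'ss
        have h3 : 2 ^ x + ∑ v ∈ T.erase x, 2 ^ v = ∑ v ∈ T, 2 ^ v :=
          Finset.add_sum_erase T (fun v => 2 ^ v) hxT
        omega
    rw [hk'eq]
    exact Nat.add_lt_add_left (Nat.sub_lt_sub_left hT'lt4 hcolex) _
  · -- the new vertex `y` is large: `k` drops by one
    push_neg at hyr
    have hk'eq : k' = k - 1 := by
      rw [hk'def, hσ'eq, Finset.filter_insert, if_neg (by omega), Finset.filter_erase,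
        Finset.card_erase_of_mem hxk]
    rw [hk'eq]
    have hrk : r - (k - 1) = (r - k) + 1 := by omega
    rw [hrk, add_mul, one_mul]
    have h5 : 4 ^ r - ∑ v ∈ T, 2 ^ v < 4 ^ r := by omega
    calc (r - k) * 4 ^ r + (4 ^ r - ∑ v ∈ T, 2 ^ v)
        < (r - k) * 4 ^ r + 4 ^ r := Nat.add_lt_add_left h5 _
      _ ≤ (r - k) * 4 ^ r + 4 ^ r + (4 ^ r - ∑ v ∈ T', 2 ^ v) := Nat.le_add_right _ _

lemma leaf_aux (f X : Finset ℕ → ℕ) :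
    ∀ E : Finset (Finset ℕ), (∀ σ ∈ E, X σ ∈ σ) →
    (∀ σ ∈ E, ∀ σ' ∈ E, σ ≠ σ' → σ \ {X σ} ⊆ σ' → f σ < f σ') →
    ∃ l : List (Finset ℕ), l.Nodup ∧ l.toFinset = E ∧
      ∀ (i j : ℕ) (hi : i < l.length) (hj : j < l.length), j < i →
        ¬ (l.get ⟨i, hi⟩ \ {X (l.get ⟨i, hi⟩)} ⊆ l.get ⟨j, hj⟩) := by
  intro E
  induction E using Finset.strongInduction with
  | _ E ih =>
    intro hX hlt
    rcases E.eq_empty_or_nonempty with rfl | hEne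
    · exact ⟨[], List.nodup_nil, by simp, by intro i j hi hj hji; simp at hi⟩
    · obtain ⟨σ₀, hσ₀, hmin⟩ := Finset.exists_min_image E f hEne
      obtain ⟨l, hnd, htf, hp⟩ := ih (E.erase σ₀) (Finset.erase_ssubset hσ₀)
        (fun σ hσ => hX σ (Finset.mem_of_mem_erase hσ))
        (fun σ hσ σ' hσ' => hlt σ (Finset.mem_of_mem_erase hσ) σ'
          (Finset.mem_of_mem_erase hσ'))
      have hσ₀l : σ₀ ∉ l := by
        intro h
        have h2 : σ₀ ∈ E.erase σ₀ := by rw [← htf]; exact List.mem_toFinset.2 h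
        exact (Finset.mem_erase.1 h2).1 rfl
      refine ⟨σ₀ :: l, List.nodup_cons.2 ⟨hσ₀l, hnd⟩, ?_, ?_⟩
      · rw [List.toFinset_cons, htf, Finset.insert_erase hσ₀]
      · intro i j hi hj hji
        match i, j, hi, hj, hji with
        | i+1, 0, hi, hj, hji =>
          have hi' : i < l.length := by simpa using hi
          simp only [List.get_cons_succ, List.get_cons_zero]
          intro hcon
          have hmem : l.get ⟨i, hi'⟩ ∈ E.erase σ₀ := by
            rw [← htf]; exact List.mem_toFinset.2 (List.get_mem l ⟨i, hi'⟩)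
          have hτE : l.get ⟨i, hi'⟩ ∈ E := Finset.mem_of_mem_erase hmem
          have hτne : l.get ⟨i, hi'⟩ ≠ σ₀ := (Finset.mem_erase.1 hmem).1
          have h1 := hlt _ hτE σ₀ hσ₀ hτne hcon
          have h2 := hmin _ hτE
          omega
        | i+1, j+1, hi, hj, hji =>
          have hi' : i < l.length := by simpa using hi
          have hj' : j < l.length := by simpa using hj
          simp only [List.get_cons_succ]
          exact hp i j hi' hj' (by omega)

/-- `Ω_1^{(r,d)}` is leaf-equivalent to the empty `r`-uniform hypergraph. -/
theorem stmt16 (r d : ℕ) (hr : 1 ≤ r) (hd : 1 ≤ d) :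
    LeafEquivToEmpty (OmegaEdges r d 1) := by
  classical
  have hX : ∀ σ ∈ OmegaEdges r d 1, xOf r σ ∈ σ :=
    fun σ h => (xOf_spec (d := d) hr h).1
  have hlt : ∀ σ ∈ OmegaEdges r d 1, ∀ σ' ∈ OmegaEdges r d 1, σ ≠ σ' →
      σ \ {xOf r σ} ⊆ σ' → fMeas r σ < fMeas r σ' :=
    fun σ hσ σ' hσ' hne hsub => fMeas_lt (d := d) hr hσ hσ' hne hsub
  obtain ⟨l, hnd, htf, hp⟩ := leaf_aux (fMeas r) (xOf r) (OmegaEdges r d 1) hX hlt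
  refine ⟨l, hnd, htf, ?_⟩
  intro i
  have hmem : l.get i ∈ OmegaEdges r d 1 := by
    rw [← htf]; exact List.mem_toFinset.2 (List.get_mem l i)
  exact ⟨xOf r (l.get i), hX _ hmem, fun j hji => hp i.1 j.1 i.2 j.2 hji⟩
end
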